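/- arXiv:1805.11503 — 2 statements merged into one kernel-verified Lean document; each statement's English description precedes it below -/
import Mathlib

section
/- Under Assumption 1, for U = S·U1 + (1−S)·U0 one has E[S·U1 + (1−S)·U0 | X, P = p] = E[U | P = p], i.e. the conditional expectation of U given (X,P) does not depend on X. -/
/-!
Write `U = S·U1 + (1 - S)·U0` with `S = 1{U_S < μ_S(Z)}`. Since `(U_i, U_S)` is independent of
`W = (Z, X)`, conditioning on `W` freezes the threshold `t = μ_S(Z)`, so that
`E[U | W] = ψ(μ_S(Z))` with `ψ(t) = E[U1; U_S < t] + E[U0; U_S ≥ t]`. As `U_S` has no atoms, the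
events `{U_S < t}` and `{F(U_S) < F(t)}` agree almost surely, hence `ψ(t)` depends on `t` only
through `F(t)` and `E[U | W] = φ(P)`. Since `σ(P) ⊆ σ(X, P) ⊆ σ(W)`, the tower property makes
`φ(P)` the conditional expectation of `U` given either of the two smaller σ-algebras.
-/

open MeasureTheory ProbabilityTheory Set

theorem MeasureTheory.Measure.AbsolutelyContinuous.nullSingletonClass {α : Type*}
    {mα : MeasurableSpace α} {μ ν : Measure α} (h : μ ≪ ν) [NullSingletonClass ν] :
    NullSingletonClass μ :=
  ⟨fun x => h (measure_singleton x)⟩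

namespace ProbabilityTheory

variable {Ω E : Type*} {mΩ : MeasurableSpace Ω} {μ : Measure Ω} [NormedAddCommGroup E]
  [NormedSpace ℝ E] [CompleteSpace E]

theorem condExp_ae_eq_of_condExp_ae_eq_of_le {m₁ m₂ : MeasurableSpace Ω} [IsFiniteMeasure μ]
    {f g : Ω → E} (h₁₂ : m₁ ≤ m₂) (h₂ : m₂ ≤ mΩ) (hg : StronglyMeasurable[m₁] g)
    (hfg : μ[f | m₂] =ᵐ[μ] g) : μ[f | m₁] =ᵐ[μ] g :=
  (condExp_condExp_of_le h₁₂ h₂).symm.trans <| (condExp_congr_ae hfg).trans <|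
    (condExp_of_stronglyMeasurable (h₁₂.trans h₂) hg (integrable_condExp.congr hfg)).eventuallyEq

theorem condExp_ae_eq_condExp_comap_of_le {γ : Type*} {mγ : MeasurableSpace γ}
    {m₁ m₂ : MeasurableSpace Ω} [IsFiniteMeasure μ] {f : Ω → E} {P : Ω → γ} {φ : γ → E}
    (hφ : StronglyMeasurable φ) (hP₁ : mγ.comap P ≤ m₁) (h₁₂ : m₁ ≤ m₂) (h₂ : m₂ ≤ mΩ)
    (hf : μ[f | m₂] =ᵐ[μ] fun ω => φ (P ω)) : μ[f | m₁] =ᵐ[μ] μ[f | mγ.comap P] := by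
  have hφP : StronglyMeasurable[mγ.comap P] fun ω => φ (P ω) :=
    hφ.comp_measurable (comap_measurable P)
  exact (condExp_ae_eq_of_condExp_ae_eq_of_le h₁₂ h₂ (hφP.mono hP₁) hf).trans
    (condExp_ae_eq_of_condExp_ae_eq_of_le (hP₁.trans h₁₂) h₂ hφP hf).symm

theorem integrable_ite_mul [IsFiniteMeasure μ] {p : Ω → Prop} [DecidablePred p]
    (hp : MeasurableSet {ω | p ω}) (a b : ℝ) {Y : Ω → ℝ} (hY : Integrable Y μ) :
    Integrable (fun ω => (if p ω then a else b) * Y ω) μ := by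
  refine hY.bdd_mul (c := max |a| |b|)
    (Measurable.ite hp measurable_const measurable_const).aestronglyMeasurable
    (Filter.Eventually.of_forall fun ω => ?_)
  split_ifs
  · exact le_max_left _ _
  · exact le_max_right _ _

theorem IndepFun.condExp_comp_prod_ae_eq {α β : Type*} [MeasurableSpace α]
    [StandardBorelSpace α] [Nonempty α] {mβ : MeasurableSpace β} [IsFiniteMeasure μ]
    {W : Ω → β} {A : Ω → α}
    (hind : IndepFun W A μ) (hW : Measurable W) (hA : AEMeasurable A μ) {f : β × α → E}
    (hf : StronglyMeasurable f) (hint : Integrable (fun ω => f (W ω, A ω)) μ) :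
    μ[fun ω => f (W ω, A ω) | mβ.comap W] =ᵐ[μ] fun ω => ∫ a, f (W ω, a) ∂(μ.map A) := by
  have hcond : condDistrib A W μ =ᵐ[μ.map W] Kernel.const β (μ.map A) := by
    rw [condDistrib_ae_eq_iff_measure_eq_compProd W hA, Measure.compProd_const]
    exact (indepFun_iff_map_prod_eq_prod_map_map hW.aemeasurable hA).mp hind
  filter_upwards [condExp_prod_ae_eq_integral_condDistrib hW hA hf hint,
    ae_of_ae_map hW.aemeasurable hcond] with ω hω hκ
  rw [hω, hκ, Kernel.const_apply]

theorem cdf_map_eq_toReal [IsProbabilityMeasure μ] {Y : Ω → ℝ} (hY : Measurable Y) (t : ℝ) :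
    cdf (μ.map Y) t = (μ {ω | Y ω ≤ t}).toReal := by
  have : IsProbabilityMeasure (μ.map Y) := Measure.isProbabilityMeasure_map hY.aemeasurable
  rw [cdf_eq_real, map_measureReal_apply hY measurableSet_Iic]
  rfl

theorem measure_lt_and_cdf_eq_zero (ν : Measure ℝ) [IsProbabilityMeasure ν]
    [NullSingletonClass ν] (t : ℝ) : ν {s | s < t ∧ cdf ν s = cdf ν t} = 0 := by
  set A := {s | s < t ∧ cdf ν s = cdf ν t}
  have hIoc : ∀ s ∈ A, ν (Ioc s t) = 0 := by
    rintro s ⟨-, hs⟩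
    rw [← measure_cdf (μ := ν), StieltjesFunction.measure_Ioc, hs, sub_self,
      ENNReal.ofReal_zero]
  -- `A` is an interval ending at `t`, so apart from its least element it is covered by
  -- countably many of these null intervals.
  have hcover : A ⊆ {s | IsLeast A s} ∪ ⋃ q : ℚ, ⋃ (_ : (q : ℝ) ∈ A), Ioc (q : ℝ) t := by
    intro s hs
    by_cases hleast : IsLeast A s
    · exact Or.inl hleast
    obtain ⟨s', hs'A, hs's⟩ : ∃ s' ∈ A, s' < s := by
      simpa [IsLeast, hs, lowerBounds] using hleast
    obtain ⟨q, hs'q, hqs⟩ := exists_rat_btwn hs's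
    have hqA : (q : ℝ) ∈ A := ⟨hqs.trans hs.1, le_antisymm (monotone_cdf ν (hqs.trans hs.1).le)
      (hs'A.2 ▸ monotone_cdf ν hs'q.le)⟩
    exact Or.inr (mem_iUnion₂.2 ⟨q, hqA, hqs, hs.1.le⟩)
  refine measure_mono_null hcover (measure_union_null ?_ ?_)
  · exact Set.Subsingleton.measure_zero (fun a ha b hb => ha.unique hb) ν
  · exact measure_iUnion_null fun q => measure_iUnion_null (hIoc q)

theorem ae_lt_iff_cdf_lt (ν : Measure ℝ) [IsProbabilityMeasure ν] [NullSingletonClass ν]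
    (t : ℝ) : ∀ᵐ s ∂ν, s < t ↔ cdf ν s < cdf ν t := by
  filter_upwards [measure_eq_zero_iff_ae_notMem.1 (measure_lt_and_cdf_eq_zero ν t)] with s hs
  refine ⟨fun hst => (monotone_cdf ν hst.le).lt_of_ne fun h => hs ⟨hst, h⟩, ?_⟩
  exact fun h => lt_of_not_ge fun hts => h.not_ge (monotone_cdf ν hts)

theorem exists_condExp_ite_mul_ae_eq_comp_cdf [IsProbabilityMeasure μ] {β : Type*}
    {mβ : MeasurableSpace β} {W : Ω → β} {Y T : Ω → ℝ} {τ : β → ℝ} (hW : Measurable W)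
    (hY : Measurable Y) (hT : Measurable T) (hτ : Measurable τ)
    (hind : IndepFun (fun ω => (Y ω, T ω)) W μ) [NullSingletonClass (μ.map T)]
    (hYint : Integrable Y μ) (a b : ℝ) :
    ∃ φ : ℝ → ℝ, Measurable φ ∧
      μ[fun ω => (if T ω < τ (W ω) then a else b) * Y ω | mβ.comap W]
        =ᵐ[μ] fun ω => φ (cdf (μ.map T) (τ (W ω))) := by
  have : IsProbabilityMeasure (μ.map T) := Measure.isProbabilityMeasure_map hT.aemeasurable
  have hshift : ∀ t, ∫ ω, (if T ω < t then a else b) * Y ω ∂μ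
      = ∫ ω, (if cdf (μ.map T) (T ω) < cdf (μ.map T) t then a else b) * Y ω ∂μ := fun t =>
    integral_congr_ae <| by
      filter_upwards [ae_of_ae_map hT.aemeasurable (ae_lt_iff_cdf_lt _ t)] with ω h
      simp only [h]
  refine ⟨fun p => ∫ ω, (if cdf (μ.map T) (T ω) < p then a else b) * Y ω ∂μ, ?_, ?_⟩
  · have hmeas : Measurable fun x : ℝ × Ω =>
        (if cdf (μ.map T) (T x.2) < x.1 then a else b) * Y x.2 :=
      (Measurable.ite (measurableSet_lt ((monotone_cdf _).measurable.comp (hT.comp measurable_snd))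
        measurable_fst) measurable_const measurable_const).mul (hY.comp measurable_snd)
    exact hmeas.stronglyMeasurable.integral_prod_right'.measurable
  · have hmeas : Measurable fun x : β × ℝ × ℝ => (if x.2.2 < τ x.1 then a else b) * x.2.1 :=
      (Measurable.ite (measurableSet_lt (measurable_snd.snd) (hτ.comp measurable_fst))
        measurable_const measurable_const).mul measurable_snd.fst
    refine (hind.symm.condExp_comp_prod_ae_eq hW (hY.prodMk hT).aemeasurable
      hmeas.stronglyMeasurable ?_).trans (Filter.Eventually.of_forall fun ω => ?_)
    · exact integrable_ite_mul (measurableSet_lt hT (hτ.comp hW)) a b hYint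
    · dsimp only
      rw [integral_map (hY.prodMk hT).aemeasurable, hshift]
      exact (hmeas.comp (measurable_const.prodMk measurable_id)).aestronglyMeasurable

end ProbabilityTheory

theorem statement_1_general {Ω 𝒳 𝒵 : Type*} [MeasurableSpace Ω] [MeasurableSpace 𝒳]
    [MeasurableSpace 𝒵] (μ : Measure Ω) [IsProbabilityMeasure μ]
    (X : Ω → 𝒳) (Z : Ω → 𝒵) (U0 U1 US : Ω → ℝ)
    (hX : Measurable X) (hZ : Measurable Z)
    (hU0 : Measurable U0) (hU1 : Measurable U1) (hUS : Measurable US)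
    (μS : 𝒵 → ℝ) (hμS : Measurable μS)
    -- Assumption 1(2): independence of the unobservables from (Z, X)
    (hindep1 : IndepFun (fun ω => (U1 ω, US ω)) (fun ω => (Z ω, X ω)) μ)
    (hindep0 : IndepFun (fun ω => (U0 ω, US ω)) (fun ω => (Z ω, X ω)) μ)
    -- Assumption 1(3): the distribution of U_S is absolutely continuous
    (habs : Measure.map US μ ≪ volume)
    -- Assumption 1(4): finite first moments
    (hU0int : Integrable U0 μ) (hU1int : Integrable U1 μ)
    -- the cdf of U_S, the unobserved propensity V, the propensity score P,
    -- the treatment indicator S and the composite error U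
    (F : ℝ → ℝ) (hF : ∀ t, F t = (μ {ω | US ω ≤ t}).toReal)
    (P S U : Ω → ℝ)
    (hP : ∀ ω, P ω = F (μS (Z ω)))
    (hS : ∀ ω, S ω = if US ω < μS (Z ω) then 1 else 0)
    (hU : ∀ ω, U ω = S ω * U1 ω + (1 - S ω) * U0 ω) :
    μ[U | MeasurableSpace.comap (fun ω => (X ω, P ω)) inferInstance]
      =ᵐ[μ] μ[U | MeasurableSpace.comap P inferInstance] := by
  have : NullSingletonClass (μ.map US) := habs.nullSingletonClass
  obtain rfl : F = cdf (μ.map US) := funext fun t => (hF t).trans (cdf_map_eq_toReal hUS t).symm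
  set W : Ω → 𝒵 × 𝒳 := fun ω => (Z ω, X ω)
  have hW : Measurable W := hZ.prodMk hX
  have hτ : Measurable fun w : 𝒵 × 𝒳 => μS w.1 := hμS.comp measurable_fst
  obtain ⟨φ1, hφ1, hcond1⟩ :=
    exists_condExp_ite_mul_ae_eq_comp_cdf hW hU1 hUS hτ hindep1 hU1int 1 0
  obtain ⟨φ0, hφ0, hcond0⟩ :=
    exists_condExp_ite_mul_ae_eq_comp_cdf hW hU0 hUS hτ hindep0 hU0int 0 1
  have hUsplit : U = (fun ω => (if US ω < μS (Z ω) then 1 else 0) * U1 ω)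
      + fun ω => (if US ω < μS (Z ω) then 0 else 1) * U0 ω := by
    funext ω
    rw [hU, hS, Pi.add_apply]
    split_ifs <;> ring
  have hs : MeasurableSet {ω | US ω < μS (Z ω)} := measurableSet_lt hUS (hμS.comp hZ)
  have hcondW : μ[U | MeasurableSpace.comap W inferInstance]
      =ᵐ[μ] fun ω => (φ1 + φ0) (P ω) := by
    rw [hUsplit]
    refine (condExp_add (integrable_ite_mul hs 1 0 hU1int) (integrable_ite_mul hs 0 1 hU0int)
      _).trans ((hcond1.add hcond0).trans (Filter.Eventually.of_forall fun ω => ?_))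
    simp only [Pi.add_apply, hP, W]
  have hP_W : Measurable[MeasurableSpace.comap W inferInstance] P := by
    rw [show P = (fun w : 𝒵 × 𝒳 => cdf (μ.map US) (μS w.1)) ∘ W from funext hP]
    exact ((monotone_cdf _).measurable.comp hτ).comp (comap_measurable W)
  have hXP_W : MeasurableSpace.comap (fun ω => (X ω, P ω)) inferInstance
      ≤ MeasurableSpace.comap W inferInstance :=
    ((measurable_snd.comp (comap_measurable W)).prodMk hP_W).comap_le
  have hP_XP : MeasurableSpace.comap P inferInstance
      ≤ MeasurableSpace.comap (fun ω => (X ω, P ω)) inferInstance :=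
    (measurable_snd.comp (comap_measurable (fun ω => (X ω, P ω))) :).comap_le
  exact condExp_ae_eq_condExp_comap_of_le (hφ1.add hφ0).stronglyMeasurable hP_XP hXP_W
    hW.comap_le hcondW

/-- Generalized Roy model: `S = 1{μ_S(Z) − U_S > 0}`, `V = F_{U_S}(U_S)`,
`P = F_{U_S}(μ_S(Z))`, `U = S·U1 + (1−S)·U0`. Under Assumption 1 (independence of
`(U1, U_S)` and `(U0, U_S)` from `(Z, X)`, absolute continuity of the distribution of
`U_S`, finite first moments of `U1, U0`, and `0 < Pr(S = 1 | Z) < 1`), one has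
`E[S·U1 + (1−S)·U0 | X, P = p] = E[U | P = p]`, i.e. the conditional expectation of `U`
given `(X, P)` does not depend on `X`. -/
theorem statement_1 {Ω 𝒳 𝒵 : Type*} [MeasurableSpace Ω] [MeasurableSpace 𝒳]
    [MeasurableSpace 𝒵] (μ : Measure Ω) [IsProbabilityMeasure μ]
    (X : Ω → 𝒳) (Z : Ω → 𝒵) (U0 U1 US : Ω → ℝ)
    (hX : Measurable X) (hZ : Measurable Z)
    (hU0 : Measurable U0) (hU1 : Measurable U1) (hUS : Measurable US)
    (μS : 𝒵 → ℝ) (hμS : Measurable μS)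
    -- Assumption 1(2): independence of the unobservables from (Z, X)
    (hindep1 : IndepFun (fun ω => (U1 ω, US ω)) (fun ω => (Z ω, X ω)) μ)
    (hindep0 : IndepFun (fun ω => (U0 ω, US ω)) (fun ω => (Z ω, X ω)) μ)
    -- Assumption 1(3): the distribution of U_S is absolutely continuous
    (habs : Measure.map US μ ≪ volume)
    -- Assumption 1(4): finite first moments
    (hU0int : Integrable U0 μ) (hU1int : Integrable U1 μ)
    -- the cdf of U_S, the unobserved propensity V, the propensity score P,
    -- the treatment indicator S and the composite error U
    (F : ℝ → ℝ) (hF : ∀ t, F t = (μ {ω | US ω ≤ t}).toReal)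
    (V P S U : Ω → ℝ)
    (hV : ∀ ω, V ω = F (US ω))
    (hP : ∀ ω, P ω = F (μS (Z ω)))
    (hS : ∀ ω, S ω = if US ω < μS (Z ω) then 1 else 0)
    (hU : ∀ ω, U ω = S ω * U1 ω + (1 - S ω) * U0 ω)
    -- Assumption 1(5): 0 < Pr(S = 1 | Z) < 1
    (hsel : ∀ᵐ ω ∂μ, 0 < (μ[S | MeasurableSpace.comap Z inferInstance]) ω
        ∧ (μ[S | MeasurableSpace.comap Z inferInstance]) ω < 1) :
    μ[U | MeasurableSpace.comap (fun ω => (X ω, P ω)) inferInstance]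
      =ᵐ[μ] μ[U | MeasurableSpace.comap P inferInstance] :=
  statement_1_general μ X Z U0 U1 US hX hZ hU0 hU1 hUS μS hμS hindep1 hindep0 habs hU0int hU1int F
    hF P S U hP hS hU
end

section
/- Let Z be a random vector, V a random variable uniformly distributed on [0,1], and U0, U1 integrable random variables such that (U0, U1, V) is independent of Z. Let g be a measurable function with values in [0,1], set S = 1{g(Z) > V} and U = S·U1 + (1−S)·U0, and define φ(p) = E[1{p > V}·U1 + 1{p ≤ V}·U0]. Then E[U | Z] = φ(g(Z)) almost surely, and moreover, writing P = g(Z), E[U | P] = φ(P) almost surely; in particular E[U | Z = z] = g_{U|P}(g_{S|Z}(z)) where g_{U|P}(p) = E[U | P = p] and g_{S|Z}(z) = E[S | Z = z] = g(z). -/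
open MeasureTheory ProbabilityTheory


lemma aux_condexp {Ω α β : Type*} [MeasurableSpace Ω] [MeasurableSpace α] [MeasurableSpace β]
    (μ : Measure Ω) [IsProbabilityMeasure μ]
    (W : Ω → β) (X : Ω → α) (hW : Measurable W) (hX : Measurable X)
    (hindep : IndepFun W X μ)
    (f : β → α → ℝ) (hf : Measurable (Function.uncurry f))
    (M : β → ℝ) (hMmeas : Measurable M)
    (hMint : Integrable (fun ω => M (W ω)) μ)
    (hMbd : ∀ w x, |f w x| ≤ M w) :
    μ[(fun ω => f (W ω) (X ω)) | MeasurableSpace.comap X inferInstance]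
      =ᵐ[μ] fun ω => ∫ ω', f (W ω') (X ω) ∂μ := by
  have hjoint : μ.map (fun ω => (W ω, X ω)) = (μ.map W).prod (μ.map X) :=
    (indepFun_iff_map_prod_eq_prod_map_map hW.aemeasurable hX.aemeasurable).1 hindep
  have hWX : Measurable (fun ω => (W ω, X ω)) := hW.prodMk hX
  have : IsProbabilityMeasure (μ.map W) := Measure.isProbabilityMeasure_map hW.aemeasurable
  have : IsProbabilityMeasure (μ.map X) := Measure.isProbabilityMeasure_map hX.aemeasurable
  -- the candidate function on α
  set h : α → ℝ := fun x => ∫ w, f w x ∂(μ.map W) with hh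
  have hchg : ∀ x, (∫ ω', f (W ω') x ∂μ) = h x := fun x => by
    rw [hh]
    exact (integral_map hW.aemeasurable
      ((hf.comp (measurable_id.prodMk measurable_const)).aestronglyMeasurable)).symm
  have hMintν : Integrable M (μ.map W) := by
    rwa [integrable_map_measure hMmeas.aestronglyMeasurable hW.aemeasurable]
  -- strong measurability of h
  have hhsm : StronglyMeasurable h := by
    have : Measurable (fun q : α × β => f q.2 q.1) := hf.comp measurable_swap
    exact this.stronglyMeasurable.integral_prod_right'
  -- boundedness of h
  have hhbd : ∀ x, |h x| ≤ ∫ w, M w ∂(μ.map W) := by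
    intro x
    calc |h x| ≤ ∫ w, |f w x| ∂(μ.map W) := by
          simpa [Real.norm_eq_abs] using
            norm_integral_le_integral_norm (μ := μ.map W) (f := fun w => f w x)
    _ ≤ ∫ w, M w ∂(μ.map W) := by
        refine integral_mono_of_nonneg (Filter.Eventually.of_forall fun w => abs_nonneg _)
          hMintν (Filter.Eventually.of_forall fun w => hMbd w x)
  -- integrability of f(W,X)
  have hfWX : Integrable (fun ω => f (W ω) (X ω)) μ := by
    refine Integrable.mono hMint ((hf.comp hWX).aestronglyMeasurable) ?_
    exact Filter.Eventually.of_forall fun ω => by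
      simpa using (hMbd (W ω) (X ω)).trans (le_abs_self _)
  -- integrability of h ∘ X
  have hhX : Integrable (fun ω => h (X ω)) μ := by
    refine Integrable.mono (integrable_const (∫ w, M w ∂(μ.map W)))
      ((hhsm.measurable.comp hX).aestronglyMeasurable) ?_
    exact Filter.Eventually.of_forall fun ω => by
      simpa using (hhbd (X ω)).trans (le_abs_self _)
  have hfun : (fun ω => ∫ ω', f (W ω') (X ω) ∂μ) = fun ω => h (X ω) :=
    funext fun ω => hchg (X ω)
  rw [hfun]
  refine (ae_eq_condExp_of_forall_setIntegral_eq hX.comap_le hfWX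
    (fun s _ _ => hhX.integrableOn) ?_ ?_).symm
  · rintro s ⟨B, hB, rfl⟩ -
    -- integrability over the product
    have hprodint : Integrable (fun q : β × α => B.indicator (fun _ => (1:ℝ)) q.2 * f q.1 q.2)
        ((μ.map W).prod (μ.map X)) := by
      have hmeas : Measurable (fun q : β × α => B.indicator (fun _ => (1:ℝ)) q.2 * f q.1 q.2) :=
        ((measurable_const.indicator hB).comp measurable_snd).mul hf
      have hMfst : Integrable (fun q : β × α => M q.1) ((μ.map W).prod (μ.map X)) := by
        refine Integrable.comp_measurable ?_ measurable_fst
        rw [show Measure.map (Prod.fst) ((μ.map W).prod (μ.map X))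
            = ((μ.map W).prod (μ.map X)).fst from rfl, Measure.fst_prod]
        exact hMintν
      refine Integrable.mono hMfst hmeas.aestronglyMeasurable ?_
      refine Filter.Eventually.of_forall fun q => ?_
      simp only [Real.norm_eq_abs, abs_mul]
      calc |B.indicator (fun _ => (1:ℝ)) q.2| * |f q.1 q.2| ≤ 1 * |f q.1 q.2| := by
            refine mul_le_mul_of_nonneg_right ?_ (abs_nonneg _)
            by_cases hq : q.2 ∈ B <;> simp [Set.indicator, hq]
      _ = |f q.1 q.2| := one_mul _
      _ ≤ M q.1 := hMbd _ _
      _ ≤ |M q.1| := le_abs_self _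
    have key : ∫ ω in X ⁻¹' B, f (W ω) (X ω) ∂μ
        = ∫ ω in X ⁻¹' B, h (X ω) ∂μ := by
      have e1 : ∫ ω in X ⁻¹' B, f (W ω) (X ω) ∂μ
          = ∫ ω, B.indicator (fun _ => (1:ℝ)) (X ω) * f (W ω) (X ω) ∂μ := by
        rw [← integral_indicator (hX hB)]
        congr 1
        ext ω
        by_cases hω : X ω ∈ B <;> simp [Set.indicator, hω]
      have e2 : ∫ ω, B.indicator (fun _ => (1:ℝ)) (X ω) * f (W ω) (X ω) ∂μ
          = ∫ q : β × α, B.indicator (fun _ => (1:ℝ)) q.2 * f q.1 q.2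
              ∂((μ.map W).prod (μ.map X)) := by
        rw [← hjoint]
        exact (integral_map hWX.aemeasurable
          (((measurable_const.indicator hB).comp measurable_snd).mul hf).aestronglyMeasurable).symm
      have e3 : ∫ q : β × α, B.indicator (fun _ => (1:ℝ)) q.2 * f q.1 q.2
              ∂((μ.map W).prod (μ.map X))
          = ∫ x, B.indicator (fun _ => (1:ℝ)) x * h x ∂(μ.map X) := by
        rw [integral_prod_symm _ hprodint]
        congr 1
        ext x
        show ∫ w, B.indicator (fun _ => (1:ℝ)) x * f w x ∂(μ.map W)
            = B.indicator (fun _ => (1:ℝ)) x * h x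
        rw [hh, integral_const_mul]
      have e4 : ∫ x, B.indicator (fun _ => (1:ℝ)) x * h x ∂(μ.map X)
          = ∫ ω, B.indicator (fun _ => (1:ℝ)) (X ω) * h (X ω) ∂μ := by
        exact integral_map hX.aemeasurable
          ((measurable_const.indicator hB).mul hhsm.measurable).aestronglyMeasurable
      have e5 : ∫ ω, B.indicator (fun _ => (1:ℝ)) (X ω) * h (X ω) ∂μ
          = ∫ ω in X ⁻¹' B, h (X ω) ∂μ := by
        rw [← integral_indicator (hX hB)]
        congr 1
        ext ω
        by_cases hω : X ω ∈ B <;> simp [Set.indicator, hω]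
      rw [e1, e2, e3, e4, e5]
    exact key.symm
  · exact ⟨fun ω => h (X ω), hhsm.comp_measurable (measurable_iff_comap_le.2 le_rfl),
      Filter.EventuallyEq.rfl⟩


/-- Let `Z` be a random vector, `V` uniform on `[0,1]`, and `U0, U1` integrable random variables
with `(U0, U1, V)` independent of `Z`. Let `g` be measurable with values in `[0,1]`, set
`S = 1{g(Z) > V}` and `U = S·U1 + (1−S)·U0`, and define
`φ(p) = E[1{p > V}·U1 + 1{p ≤ V}·U0]`. Then `E[U | Z] = φ(g(Z))` a.s., and writing
`P = g(Z)`, `E[U | P] = φ(P)` a.s.; in particular `E[U | Z = z] = g_{U|P}(g_{S|Z}(z))`. -/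
theorem statement_8 {Ω 𝒵 : Type*} [MeasurableSpace Ω] [MeasurableSpace 𝒵]
    (μ : Measure Ω) [IsProbabilityMeasure μ]
    (Z : Ω → 𝒵) (V U0 U1 : Ω → ℝ)
    (hZ : Measurable Z) (hV : Measurable V) (hU0 : Measurable U0) (hU1 : Measurable U1)
    (hU0int : Integrable U0 μ) (hU1int : Integrable U1 μ)
    (hVunif : Measure.map V μ = volume.restrict (Set.Icc (0 : ℝ) 1))
    (hindep : IndepFun (fun ω => (U0 ω, U1 ω, V ω)) Z μ)
    (g : 𝒵 → ℝ) (hg : Measurable g) (hgrange : ∀ z, g z ∈ Set.Icc (0 : ℝ) 1)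
    (S U : Ω → ℝ)
    (hS : ∀ ω, S ω = if V ω < g (Z ω) then 1 else 0)
    (hU : ∀ ω, U ω = S ω * U1 ω + (1 - S ω) * U0 ω)
    (φ : ℝ → ℝ)
    (hφ : ∀ p, φ p = ∫ ω, ((if V ω < p then (1 : ℝ) else 0) * U1 ω
        + (if p ≤ V ω then (1 : ℝ) else 0) * U0 ω) ∂μ) :
    (μ[U | MeasurableSpace.comap Z inferInstance] =ᵐ[μ] fun ω => φ (g (Z ω)))
    ∧ (μ[U | MeasurableSpace.comap (fun ω => g (Z ω)) inferInstance]
        =ᵐ[μ] fun ω => φ (g (Z ω))) := by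
  classical
  set W : Ω → ℝ × ℝ × ℝ := fun ω => (U0 ω, U1 ω, V ω) with hWdef
  set F : ℝ × ℝ × ℝ → ℝ → ℝ := fun w p =>
    (if w.2.2 < p then (1:ℝ) else 0) * w.2.1 + (if p ≤ w.2.2 then (1:ℝ) else 0) * w.1 with hFdef
  have hWmeas : Measurable W := hU0.prodMk (hU1.prodMk hV)
  have hFmeas : Measurable (Function.uncurry F) := by
    apply Measurable.add
    · exact (Measurable.ite (measurableSet_lt (measurable_fst.snd.snd) measurable_snd)
        measurable_const measurable_const).mul measurable_fst.snd.fst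
    · exact (Measurable.ite (measurableSet_le measurable_snd measurable_fst.snd.snd)
        measurable_const measurable_const).mul measurable_fst.fst
  set M : ℝ × ℝ × ℝ → ℝ := fun w => |w.2.1| + |w.1| with hMdef
  have hMmeas : Measurable M := (measurable_snd.fst.abs).add (measurable_fst.abs)
  have hMint : Integrable (fun ω => M (W ω)) μ := hU1int.abs.add hU0int.abs
  have hMbd : ∀ w p, |F w p| ≤ M w := by
    intro w p
    by_cases h : w.2.2 < p
    · simp only [hFdef, hMdef, if_pos h, if_neg (not_le.2 h), one_mul, zero_mul, add_zero]
      exact le_add_of_nonneg_right (abs_nonneg _)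
    · simp only [hFdef, hMdef, if_neg h, if_pos (not_lt.1 h), one_mul, zero_mul, zero_add]
      exact le_add_of_nonneg_left (abs_nonneg _)
  have hUeq : U = fun ω => F (W ω) (g (Z ω)) := by
    funext ω
    rw [hU, hS]
    by_cases h : V ω < g (Z ω)
    · simp [hFdef, hWdef, if_pos h, if_neg (not_le.2 h)]
    · simp [hFdef, hWdef, if_neg h, if_pos (not_lt.1 h)]
  have hφ' : ∀ p, φ p = ∫ ω', F (W ω') p ∂μ := fun p => hφ p
  have hφg : (fun ω => ∫ ω', F (W ω') (g (Z ω)) ∂μ) = fun ω => φ (g (Z ω)) :=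
    funext fun ω => (hφ' (g (Z ω))).symm
  constructor
  · have h1 := aux_condexp μ W Z hWmeas hZ hindep (fun w z => F w (g z))
      (hFmeas.comp (measurable_fst.prodMk (hg.comp measurable_snd)))
      M hMmeas hMint (fun w z => hMbd w (g z))
    rw [hUeq]
    exact h1.trans (Filter.EventuallyEq.of_eq hφg)
  · have hindep' : IndepFun W (fun ω => g (Z ω)) μ := hindep.comp measurable_id hg
    have h2 := aux_condexp μ W (fun ω => g (Z ω)) hWmeas (hg.comp hZ) hindep' F hFmeas
      M hMmeas hMint hMbd
    rw [hUeq]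
    exact h2.trans (Filter.EventuallyEq.of_eq hφg)
end
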